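/- arXiv:0904.4176 — 3 statements merged into one kernel-verified Lean document; each statement's English description precedes it below -/
import Mathlib

section
/- Let d ≥ 1 be an integer and define P : ℕ → ℝ by P(d+1) = 1/2 and P(k) = ((d·k − d² − d + 1)/(d·k − d² + d + 2))·P(k−1) for k > d+1 (and P(k) = 0 for k < d+1). Then ∑_{k=d+1}^∞ P(k) = 1. -/
/-!
Writing `Q n = P (n + d + 1)`, the tail `∑_{m ≥ n} Q m` has the closed form
`w n = degreeTail d Q n = (d n + 2 (d + 1)) / (d + 1) · Q n`:
the recursion gives exactly `Q n = w n - w (n + 1)`. So the series telescopes to `w 0 = 2 Q 0 = 1`, once `w n → 0`. For that, `w` satisfies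
`w (n + 1) = (d n + d + 1) / (d n + 2 d + 2) · w n`, and this ratio is at most `(n + 1) / (n + 2)`,
so `w n ≤ w 0 / (n + 1)`.
-/

open Filter Finset Topology

section Decay

variable {u ρ : ℕ → ℝ}

theorem nonneg_and_le_div_succ_of_succ_eq_mul (hu₀ : 0 ≤ u 0)
    (hρ₀ : ∀ n, 0 ≤ ρ n) (hρ : ∀ n : ℕ, ρ n ≤ (n + 1) / (n + 2))
    (hu : ∀ n, u (n + 1) = ρ n * u n) (n : ℕ) :
    0 ≤ u n ∧ u n ≤ u 0 / (n + 1) := by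
  induction n with
  | zero => simpa using hu₀
  | succ n ih =>
    obtain ⟨hn₀, hn⟩ := ih
    refine ⟨hu n ▸ mul_nonneg (hρ₀ n) hn₀, ?_⟩
    calc u (n + 1) = ρ n * u n := hu n
      _ ≤ (n + 1) / (n + 2) * (u 0 / (n + 1)) := mul_le_mul (hρ n) hn hn₀ (by positivity)
      _ = u 0 / ((n + 1 : ℕ) + 1) := by push_cast; field_simp; ring

theorem tendsto_zero_of_succ_eq_mul (hu₀ : 0 ≤ u 0)
    (hρ₀ : ∀ n, 0 ≤ ρ n) (hρ : ∀ n : ℕ, ρ n ≤ (n + 1) / (n + 2))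
    (hu : ∀ n, u (n + 1) = ρ n * u n) :
    Tendsto u atTop (𝓝 0) := by
  have hbound := nonneg_and_le_div_succ_of_succ_eq_mul hu₀ hρ₀ hρ hu
  have hlim : Tendsto (fun n : ℕ ↦ u 0 / (n + 1)) atTop (𝓝 0) := by
    simpa [div_eq_mul_inv] using tendsto_one_div_add_atTop_nhds_zero_nat.const_mul (u 0)
  exact squeeze_zero (fun n ↦ (hbound n).1) (fun n ↦ (hbound n).2) hlim

end Decay

theorem hasSum_sub_succ_of_tendsto_zero {w : ℕ → ℝ} (hw : ∀ n, w (n + 1) ≤ w n)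
    (hlim : Tendsto w atTop (𝓝 0)) :
    HasSum (fun n ↦ w n - w (n + 1)) (w 0) := by
  rw [hasSum_iff_tendsto_nat_of_nonneg (fun n ↦ sub_nonneg.mpr (hw n))]
  simp_rw [Finset.sum_range_sub']
  simpa using tendsto_const_nhds.sub hlim

section DegreeDistribution

variable (d : ℕ) (Q : ℕ → ℝ)

def DegreeRecursion : Prop :=
  ∀ n : ℕ, Q (n + 1) = ((d : ℝ) * (n + 1) + 1) / ((d : ℝ) * (n + 1) + 2 * d + 2) * Q n

noncomputable def degreeTail (n : ℕ) : ℝ := ((d : ℝ) * n + 2 * (d + 1)) / (d + 1) * Q n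

variable {d Q}

theorem degreeTail_succ (hQ : DegreeRecursion d Q) (n : ℕ) :
    degreeTail d Q (n + 1) =
      ((d : ℝ) * n + d + 1) / ((d : ℝ) * n + 2 * d + 2) * degreeTail d Q n := by
  simp only [degreeTail, hQ n]
  push_cast
  field_simp
  ring

theorem degreeTail_sub_succ (hQ : DegreeRecursion d Q) (n : ℕ) :
    degreeTail d Q n - degreeTail d Q (n + 1) = Q n := by
  simp only [degreeTail, hQ n]
  push_cast
  field_simp
  ring

theorem degreeTail_ratio_le_succ_div_succ_succ (d n : ℕ) :
    ((d : ℝ) * n + d + 1) / ((d : ℝ) * n + 2 * d + 2) ≤ (n + 1) / (n + 2) := by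
  rw [div_le_div_iff₀ (by positivity) (by positivity)]
  nlinarith [n.cast_nonneg (α := ℝ), d.cast_nonneg (α := ℝ)]

theorem DegreeRecursion.hasSum_two_mul (hQ : DegreeRecursion d Q)
    (hQ₀ : 0 ≤ Q 0) : HasSum Q (2 * Q 0) := by
  have hdecay := degreeTail_succ hQ
  have hρ₀ : ∀ n : ℕ, 0 ≤ ((d : ℝ) * n + d + 1) / ((d : ℝ) * n + 2 * d + 2) :=
    fun n ↦ by positivity
  have hρ := degreeTail_ratio_le_succ_div_succ_succ d
  have hw₀ : 0 ≤ degreeTail d Q 0 := by simp only [degreeTail]; positivity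
  have hw := nonneg_and_le_div_succ_of_succ_eq_mul hw₀ hρ₀ hρ hdecay
  have hanti : ∀ n, degreeTail d Q (n + 1) ≤ degreeTail d Q n := fun n ↦ by
    rw [hdecay n]
    exact mul_le_of_le_one_left (hw n).1 (div_le_one_of_le₀ (by linarith) (by positivity))
  have h := hasSum_sub_succ_of_tendsto_zero hanti (tendsto_zero_of_succ_eq_mul hw₀ hρ₀ hρ hdecay)
  simp only [degreeTail_sub_succ hQ] at h
  convert h using 1
  simp only [degreeTail]
  field_simp
  ring

end DegreeDistribution

theorem degree_dist_sums_to_one_general (d : ℕ) (P : ℕ → ℝ)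
    (hinit : P (d + 1) = 1 / 2)
    (hrec : ∀ k, d + 1 < k →
      P k = (((d : ℝ) * k - (d : ℝ) ^ 2 - (d : ℝ) + 1) /
             ((d : ℝ) * k - (d : ℝ) ^ 2 + (d : ℝ) + 2)) * P (k - 1))
    (hzero : ∀ k, k < d + 1 → P k = 0) :
    ∑' k : ℕ, P k = 1 := by
  have hshift : DegreeRecursion d fun n ↦ P (n + (d + 1)) := fun n ↦ by
    dsimp only
    rw [hrec _ (by omega), show n + 1 + (d + 1) - 1 = n + (d + 1) by omega]
    push_cast
    ring_nf
  have hQ := hshift.hasSum_two_mul (by simp [hinit])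
  have hhead : ∑ i ∈ range (d + 1), P i = 0 :=
    Finset.sum_eq_zero fun i hi ↦ hzero i (Finset.mem_range.mp hi)
  rw [(hasSum_nat_add_iff (d + 1)).mp hQ |>.tsum_eq, hhead]
  simp [hinit]

theorem degree_dist_sums_to_one (d : ℕ) (hd : 1 ≤ d) (P : ℕ → ℝ)
    (hinit : P (d + 1) = 1 / 2)
    (hrec : ∀ k, d + 1 < k →
      P k = (((d : ℝ) * k - (d : ℝ) ^ 2 - (d : ℝ) + 1) /
             ((d : ℝ) * k - (d : ℝ) ^ 2 + (d : ℝ) + 2)) * P (k - 1))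
    (hzero : ∀ k, k < d + 1 → P k = 0) :
    ∑' k : ℕ, P k = 1 :=
  degree_dist_sums_to_one_general d P hinit hrec hzero
end

section
/- Let d ≥ 1 be an integer and let P(k) satisfy P(d+1) = 1/2 and P(k) = ((dk − d² − d + 1)/(dk − d² + d + 2))·P(k−1) for k > d+1. Then there exist positive constants c₁ ≤ c₂ such that c₁·k^(−(2d+1)/d) ≤ P(k) ≤ c₂·k^(−(2d+1)/d) for all k ≥ d+1. -/
/-!
Dividing numerator and denominator by `d`, the recursion reads
`P (n + 1) = x / (x + α) * P n` with `x = n + s`, `s = 1/d - d` and `α = (2d + 1)/d ≥ 1`.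
Bernoulli's inequality `(1 + t)^α ≥ 1 + α t`, applied with `t = 1/x` and `t = -1/(x + α)`, gives
`(x / (x + 1))^α ≤ x / (x + α) ≤ ((x + α - 1) / (x + α))^α`. Hence `P n * (n + s)^α` is
nondecreasing and `P n * (n + s + α - 1)^α` is nonincreasing, and both shifted bases are
comparable to `n`.
-/

open Set

namespace Real

theorem add_mul_rpow_le_mul_add_one_rpow {x α : ℝ} (hx : 0 < x) (hα : 1 ≤ α) :
    (x + α) * x ^ α ≤ x * (x + 1) ^ α := by
  have bernoulli := one_add_mul_self_le_rpow_one_add (s := x⁻¹) (by linarith [inv_pos.2 hx]) hα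
  calc (x + α) * x ^ α = x * x ^ α * (1 + α * x⁻¹) := by field_simp
    _ ≤ x * x ^ α * (1 + x⁻¹) ^ α := by gcongr
    _ = x * ((1 + x⁻¹) * x) ^ α := by rw [mul_rpow (by positivity) hx.le]; ring
    _ = x * (x + 1) ^ α := by rw [add_mul, inv_mul_cancel₀ hx.ne', one_mul, add_comm]

theorem sub_mul_rpow_le_mul_sub_one_rpow {y α : ℝ} (hy : 1 ≤ y) (hα : 1 ≤ α) :
    (y - α) * y ^ α ≤ y * (y - 1) ^ α := by
  have hy₀ : 0 < y := by linarith
  have bernoulli := one_add_mul_self_le_rpow_one_add (s := -y⁻¹)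
    (by linarith [inv_le_one_of_one_le₀ hy]) hα
  have hs : 0 ≤ 1 + -y⁻¹ := by linarith [inv_le_one_of_one_le₀ hy]
  calc (y - α) * y ^ α = y * y ^ α * (1 + α * -y⁻¹) := by field_simp; ring
    _ ≤ y * y ^ α * (1 + -y⁻¹) ^ α := by gcongr
    _ = y * ((1 + -y⁻¹) * y) ^ α := by rw [mul_rpow hs hy₀.le]; ring
    _ = y * (y - 1) ^ α := by
      rw [add_mul, neg_mul, inv_mul_cancel₀ hy₀.ne', one_mul, ← sub_eq_add_neg]

end Real

theorem add_le_max_mul {m n : ℝ} (s : ℝ) (hm : 0 < m) (hmn : m ≤ n) :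
    n + s ≤ max 1 ((m + s) / m) * n := by
  rcases le_total s 0 with hs | hs
  · nlinarith [le_max_left 1 ((m + s) / m)]
  · have : (m + s) / m * n = n + s * (n / m) := by field_simp
    have : 1 ≤ n / m := (one_le_div hm).2 hmn
    nlinarith [le_max_right 1 ((m + s) / m)]

theorem min_mul_le_add {m n : ℝ} (s : ℝ) (hm : 0 < m) (hmn : m ≤ n) :
    min 1 ((m + s) / m) * n ≤ n + s := by
  rcases le_total s 0 with hs | hs
  · have : (m + s) / m * n = n + s * (n / m) := by field_simp
    have : 1 ≤ n / m := (one_le_div hm).2 hmn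
    nlinarith [min_le_right 1 ((m + s) / m)]
  · nlinarith [min_le_left 1 ((m + s) / m)]

section RatioRecursion

variable {P : ℕ → ℝ} {m : ℕ} {s α : ℝ}

theorem ratio_recursion_nonneg (hα : 0 ≤ α) (hs : 0 < m + s) (hPm : 0 ≤ P m)
    (hP : ∀ n, m ≤ n → P (n + 1) = (n + s) / (n + s + α) * P n) :
    ∀ n, m ≤ n → 0 ≤ P n := by
  intro n hn
  induction n, hn using Nat.le_induction with
  | base => exact hPm
  | succ n hmn ih =>
    have : (m : ℝ) ≤ n := by exact_mod_cast hmn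
    rw [hP n hmn]
    exact mul_nonneg (div_nonneg (by linarith) (by linarith)) ih

theorem ratio_recursion_monotoneOn (hα : 1 ≤ α) (hs : 0 < m + s) (hPm : 0 ≤ P m)
    (hP : ∀ n, m ≤ n → P (n + 1) = (n + s) / (n + s + α) * P n) :
    MonotoneOn (fun n : ℕ => P n * ((n : ℝ) + s) ^ α) (Ici m) := by
  refine monotoneOn_nat_Ici_of_le_succ fun n hmn => ?_
  have hx : 0 < (n : ℝ) + s := by
    have : (m : ℝ) ≤ n := by exact_mod_cast hmn
    linarith
  have key : ((n : ℝ) + s) ^ α ≤ (n + s) / (n + s + α) * (n + s + 1) ^ α := by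
    rw [div_mul_eq_mul_div, le_div_iff₀ (by linarith), mul_comm]
    exact Real.add_mul_rpow_le_mul_add_one_rpow hx hα
  calc P n * ((n : ℝ) + s) ^ α
      ≤ P n * ((n + s) / (n + s + α) * (n + s + 1) ^ α) :=
        mul_le_mul_of_nonneg_left key (ratio_recursion_nonneg (by linarith) hs hPm hP n hmn)
    _ = P (n + 1) * (((n + 1 : ℕ) : ℝ) + s) ^ α := by
        rw [hP n hmn]; push_cast; ring_nf

theorem ratio_recursion_antitoneOn (hα : 1 ≤ α) (hs : 0 < m + s) (hPm : 0 ≤ P m)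
    (hP : ∀ n, m ≤ n → P (n + 1) = (n + s) / (n + s + α) * P n) :
    AntitoneOn (fun n : ℕ => P n * ((n : ℝ) + s + α - 1) ^ α) (Ici m) := by
  refine antitoneOn_nat_Ici_of_succ_le fun n hmn => ?_
  have hy : 1 ≤ (n : ℝ) + s + α := by
    have : (m : ℝ) ≤ n := by exact_mod_cast hmn
    linarith
  have key : (n + s) / (n + s + α) * ((n : ℝ) + s + α) ^ α ≤ (n + s + α - 1) ^ α := by
    rw [div_mul_eq_mul_div, div_le_iff₀ (by linarith), mul_comm _ (_ + α)]
    simpa using Real.sub_mul_rpow_le_mul_sub_one_rpow hy hα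
  calc P (n + 1) * (((n + 1 : ℕ) : ℝ) + s + α - 1) ^ α
      = P n * ((n + s) / (n + s + α) * ((n : ℝ) + s + α) ^ α) := by
        rw [hP n hmn]; push_cast; ring_nf
    _ ≤ P n * ((n : ℝ) + s + α - 1) ^ α :=
        mul_le_mul_of_nonneg_left key (ratio_recursion_nonneg (by linarith) hs hPm hP n hmn)

theorem ratio_recursion_rpow_bounds (hα : 1 ≤ α) (hm : 0 < m)
    (hs : 0 < m + s) (hPm : 0 < P m)
    (hP : ∀ n, m ≤ n → P (n + 1) = (n + s) / (n + s + α) * P n) :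
    ∃ c₁ c₂ : ℝ, 0 < c₁ ∧ c₁ ≤ c₂ ∧
      ∀ n, m ≤ n → c₁ * (n : ℝ) ^ (-α) ≤ P n ∧ P n ≤ c₂ * (n : ℝ) ^ (-α) := by
  have hm₀ : (0 : ℝ) < m := by exact_mod_cast hm
  set K := max 1 ((m + s) / m)
  set k := min 1 ((m + s) / m)
  have hK : 0 < K := lt_max_of_lt_left one_pos
  have hk : 0 < k := lt_min one_pos (div_pos hs hm₀)
  have bounds : ∀ n, m ≤ n →
      P m * (m + s) ^ α / K ^ α * (n : ℝ) ^ (-α) ≤ P n ∧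
      P n ≤ P m * (m + s + α - 1) ^ α / k ^ α * (n : ℝ) ^ (-α) := by
    intro n hmn
    have hn : (m : ℝ) ≤ n := by exact_mod_cast hmn
    have hn₀ : (0 : ℝ) < n := hm₀.trans_le hn
    have hPn : 0 ≤ P n := ratio_recursion_nonneg (by linarith) hs hPm.le hP n hmn
    have mono := ratio_recursion_monotoneOn hα hs hPm.le hP (mem_Ici.2 le_rfl) (mem_Ici.2 hmn) hmn
    have anti := ratio_recursion_antitoneOn hα hs hPm.le hP (mem_Ici.2 le_rfl) (mem_Ici.2 hmn) hmn
    have hkn := min_mul_le_add s hm₀ hn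
    simp only at mono anti
    rw [Real.rpow_neg hn₀.le]
    constructor
    · calc P m * (m + s) ^ α / K ^ α * ((n : ℝ) ^ α)⁻¹
          ≤ P n * (n + s) ^ α / K ^ α * ((n : ℝ) ^ α)⁻¹ := by gcongr
        _ ≤ P n * (K * n) ^ α / K ^ α * ((n : ℝ) ^ α)⁻¹ := by
          gcongr
          · linarith [mul_pos hk hn₀]
          · exact add_le_max_mul s hm₀ hn
        _ = P n := by rw [Real.mul_rpow hK.le hn₀.le]; field_simp
    · calc P n = P n * (k * n) ^ α / k ^ α * ((n : ℝ) ^ α)⁻¹ := by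
            rw [Real.mul_rpow hk.le hn₀.le]; field_simp
        _ ≤ P n * (n + s + α - 1) ^ α / k ^ α * ((n : ℝ) ^ α)⁻¹ := by
          gcongr
          linarith
        _ ≤ P m * (m + s + α - 1) ^ α / k ^ α * ((n : ℝ) ^ α)⁻¹ := by gcongr
  refine ⟨_, _, by positivity, ?_, bounds⟩
  obtain ⟨lower, upper⟩ := bounds m le_rfl
  exact le_of_mul_le_mul_right (lower.trans upper) (Real.rpow_pos_of_pos hm₀ _)

end RatioRecursion

theorem degree_dist_power_law (d : ℕ) (hd : 1 ≤ d) (P : ℕ → ℝ)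
    (hinit : P (d + 1) = 1 / 2)
    (hrec : ∀ k, d + 1 < k →
      P k = (((d : ℝ) * k - (d : ℝ) ^ 2 - (d : ℝ) + 1) /
             ((d : ℝ) * k - (d : ℝ) ^ 2 + (d : ℝ) + 2)) * P (k - 1)) :
    ∃ c₁ c₂ : ℝ, 0 < c₁ ∧ c₁ ≤ c₂ ∧
      ∀ k : ℕ, d + 1 ≤ k →
        c₁ * (k : ℝ) ^ (-(2 * (d : ℝ) + 1) / (d : ℝ)) ≤ P k ∧
        P k ≤ c₂ * (k : ℝ) ^ (-(2 * (d : ℝ) + 1) / (d : ℝ)) := by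
  have hd₀ : (0 : ℝ) < d := by exact_mod_cast hd
  have hα : 1 ≤ (2 * (d : ℝ) + 1) / d := by rw [one_le_div hd₀]; linarith
  have hratio : ∀ n, d + 1 ≤ n → P (n + 1) =
      (n + (1 / d - d)) / (n + (1 / d - d) + (2 * (d : ℝ) + 1) / d) * P n := by
    intro n hn
    rw [hrec (n + 1) (by omega), Nat.add_sub_cancel]
    congr 1
    push_cast
    field_simp
    ring
  simp only [neg_div]
  exact ratio_recursion_rpow_bounds hα (Nat.succ_pos d)
    (by push_cast; linarith [one_div_pos.2 hd₀]) (by rw [hinit]; norm_num) hratio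
end

section
/- Let σ : ℕ → ℝ be nonnegative and satisfy σ(N+1) ≤ σ(N) + N + 2σ(N)/N for all N ≥ 2. Then the average path length L(N) = 2σ(N)/(N(N−1)) satisfies L(N) = O(log N); that is, there is a constant C such that L(N) ≤ C·log N for all sufficiently large N. -/
/-!
Normalising by `N (N + 1)` turns the recurrence into `f (N + 1) ≤ f N + 1 / (N + 1)` for
`f N = σ N / (N (N + 1))`, and `1 / (N + 1) ≤ log (N + 1) - log N`, so `f N - log N` is
antitone and `f N ≤ f 2 - log 2 + log N`. Since `L N = 2 (N + 1) / (N - 1) · f N` with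
`2 (N + 1) / (N - 1) ≤ 4` for `N ≥ 3`, this gives `L N = O(log N)`.
-/

open Real

lemma Real.inv_add_one_le_log_add_one_sub_log {x : ℝ} (hx : 0 < x) :
    (x + 1)⁻¹ ≤ log (x + 1) - log x := by
  have h := one_sub_inv_le_log_of_pos (div_pos (by linarith) hx : 0 < (x + 1) / x)
  rw [log_div (by linarith) hx.ne', inv_div] at h
  calc (x + 1)⁻¹ = 1 - x / (x + 1) := by field_simp; ring
    _ ≤ _ := h

lemma div_add_one_mul_add_two_le {x a b : ℝ} (hx : 0 < x) (h : b ≤ a + x + 2 * a / x) :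
    b / ((x + 1) * (x + 2)) ≤ a / (x * (x + 1)) + (x + 1)⁻¹ := by
  have hb : b ≤ a * (x + 2) / x + x := by
    calc b ≤ a + x + 2 * a / x := h
      _ = a * (x + 2) / x + x := by field_simp; ring
  rw [div_le_iff₀ (by positivity)]
  calc b ≤ a * (x + 2) / x + x := hb
    _ ≤ a * (x + 2) / x + (x + 2) := by linarith
    _ = (a / (x * (x + 1)) + (x + 1)⁻¹) * ((x + 1) * (x + 2)) := by field_simp

lemma div_mul_add_one_le_log_add {σ : ℕ → ℝ}
    (hrec : ∀ N : ℕ, 2 ≤ N → σ (N + 1) ≤ σ N + (N : ℝ) + 2 * σ N / (N : ℝ))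
    {N : ℕ} (hN : 2 ≤ N) :
    σ N / (N * (N + 1)) ≤ σ 2 / 6 - log 2 + log N := by
  set f : ℕ → ℝ := fun n ↦ σ n / (n * (n + 1)) - log n
  have hanti : AntitoneOn f {n | 2 ≤ n} := by
    refine antitoneOn_nat_Ici_of_succ_le fun n hn ↦ ?_
    have hn0 : (0 : ℝ) < n := by exact_mod_cast (show 0 < n by omega)
    have hstep := div_add_one_mul_add_two_le hn0 (hrec n hn)
    have hlog := Real.inv_add_one_le_log_add_one_sub_log hn0
    simp only [f]
    push_cast
    rw [show (n : ℝ) + 1 + 1 = n + 2 by ring]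
    linarith
  have h := hanti (le_refl 2) hN hN
  simp only [f] at h
  norm_num at h
  linarith

lemma two_mul_div_mul_sub_one_le {x s B : ℝ} (hx : 3 ≤ x) (hB : 0 ≤ B)
    (h : s / (x * (x + 1)) ≤ B) :
    2 * s / (x * (x - 1)) ≤ 4 * B := by
  rw [div_le_iff₀ (by positivity)] at h
  rw [div_le_iff₀ (by nlinarith)]
  nlinarith [mul_le_mul_of_nonneg_left (show x + 1 ≤ 2 * (x - 1) by linarith)
    (mul_nonneg (by linarith : (0 : ℝ) ≤ x) hB)]

lemma Real.one_le_log_of_three_le {x : ℝ} (hx : 3 ≤ x) : 1 ≤ log x := by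
  rw [le_log_iff_exp_le (by linarith)]
  linarith [exp_one_lt_three]

theorem apl_log_bound_general (σ : ℕ → ℝ)
    (hrec : ∀ N : ℕ, 2 ≤ N → σ (N + 1) ≤ σ N + (N : ℝ) + 2 * σ N / (N : ℝ)) :
    ∃ C : ℝ, ∃ N₀ : ℕ, ∀ N : ℕ, N₀ ≤ N →
      2 * σ N / ((N : ℝ) * ((N : ℝ) - 1)) ≤ C * Real.log (N : ℝ) := by
  set a := σ 2 / 6 - log 2
  refine ⟨4 * (|a| + 1), 3, fun N hN ↦ ?_⟩
  have hN3 : (3 : ℝ) ≤ N := by exact_mod_cast hN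
  have hlog := Real.one_le_log_of_three_le hN3
  have hf : σ N / (N * (N + 1)) ≤ (|a| + 1) * log N := by
    calc σ N / (N * (N + 1)) ≤ a + log N := div_mul_add_one_le_log_add hrec (by omega)
      _ ≤ (|a| + 1) * log N := by nlinarith [le_abs_self a, abs_nonneg a]
  rw [mul_assoc]
  exact two_mul_div_mul_sub_one_le hN3 (by positivity) hf

theorem apl_log_bound (σ : ℕ → ℝ) (hnn : ∀ N, 0 ≤ σ N)
    (hrec : ∀ N : ℕ, 2 ≤ N → σ (N + 1) ≤ σ N + (N : ℝ) + 2 * σ N / (N : ℝ)) :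
    ∃ C : ℝ, ∃ N₀ : ℕ, ∀ N : ℕ, N₀ ≤ N →
      2 * σ N / ((N : ℝ) * ((N : ℝ) - 1)) ≤ C * Real.log (N : ℝ) :=
  apl_log_bound_general σ hrec
end
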